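/- arXiv:2408.14888 — 3 statements merged into one kernel-verified Lean document; each statement's English description precedes it below -/
import Mathlib

section
/- For a = span{λ_1, λ_4, λ_7} and a' = span{λ_9, λ_{11}, λ_{13}}, every commutator [X, Y] with X ∈ a' and Y ∈ a lies in k = span{λ_2, λ_8, λ_{14}, λ_5, λ_{10}, λ_{12}}. -/
open Matrix Complex

noncomputable section

def σ1 : Matrix (Fin 2) (Fin 2) ℂ := !![0, 1; 1, 0]
def σ2 : Matrix (Fin 2) (Fin 2) ℂ := !![0, -I; I, 0]
def σ3 : Matrix (Fin 2) (Fin 2) ℂ := !![1, 0; 0, -1]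

/-- `pauli 0 = I₂`, `pauli i = σᵢ` for `i = 1, 2, 3`. -/
def pauli : Fin 4 → Matrix (Fin 2) (Fin 2) ℂ := ![1, σ1, σ2, σ3]

/-- Kronecker (tensor) product of two `2 × 2` matrices, as a `4 × 4` matrix
(row-major convention). -/
def kron (A B : Matrix (Fin 2) (Fin 2) ℂ) : Matrix (Fin 4) (Fin 4) ℂ :=
  Matrix.of fun i j =>
    A ⟨i.val / 2, by have := i.isLt; omega⟩ ⟨j.val / 2, by have := j.isLt; omega⟩ *
    B ⟨i.val % 2, by have := i.isLt; omega⟩ ⟨j.val % 2, by have := j.isLt; omega⟩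

/-- `σ_{μν} = (1/(2i)) σ_μ ⊗ σ_ν`. -/
def sig (μ ν : Fin 4) : Matrix (Fin 4) (Fin 4) ℂ :=
  (1 / (2 * I)) • kron (pauli μ) (pauli ν)

/-- The Fano basis `λ_1, …, λ_15` of `su(4)`, so that `fano (k-1) = λ_k`. -/
def fano : Fin 15 → Matrix (Fin 4) (Fin 4) ℂ :=
  ![sig 1 0, sig 2 0, sig 3 0, sig 0 1, sig 0 2, sig 0 3, sig 1 1, sig 1 2,
    sig 1 3, sig 2 1, sig 2 2, sig 2 3, sig 3 1, sig 3 2, sig 3 3]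

def aSpan : Submodule ℝ (Matrix (Fin 4) (Fin 4) ℂ) :=
  Submodule.span ℝ {fano 0, fano 3, fano 6}

def aPrimeSpan : Submodule ℝ (Matrix (Fin 4) (Fin 4) ℂ) :=
  Submodule.span ℝ {fano 8, fano 10, fano 12}

def kSpan : Submodule ℝ (Matrix (Fin 4) (Fin 4) ℂ) :=
  Submodule.span ℝ {fano 1, fano 7, fano 13, fano 4, fano 9, fano 11}

/-!
The bracket is bilinear, so it suffices to compute the nine commutators of the spanning elements
of `a'` and `a`. Two Pauli tensors `σ_μ ⊗ σ_ν` either commute or anticommute, so each of these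
commutators is `0` or `±` a third `σ_{ρτ}`, and the ones that occur are generators of `k`.
-/

open Submodule

theorem Ring.lie_mem_of_mem_span {R A : Type*} [CommRing R] [NonUnitalNonAssocRing A]
    [Module R A] [SMulCommClass R A A] [IsScalarTower R A A]
    {s t : Set A} {K : Submodule R A} (h : ∀ x ∈ s, ∀ y ∈ t, ⁅x, y⁆ ∈ K)
    {x y : A} (hx : x ∈ span R s) (hy : y ∈ span R t) : ⁅x, y⁆ ∈ K := by
  let bracket : A →ₗ[R] A →ₗ[R] A := LinearMap.mul R A - (LinearMap.mul R A).flip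
  have hle : map₂ bracket (span R s) (span R t) ≤ K := by
    rw [map₂_span_span, span_le]
    rintro _ ⟨x, hx, y, hy, rfl⟩
    exact h x hx y hy
  exact hle (apply_mem_map₂ bracket hx hy)

lemma kron_fin_two (A B : Matrix (Fin 2) (Fin 2) ℂ) : kron A B =
    !![A 0 0 * B 0 0, A 0 0 * B 0 1, A 0 1 * B 0 0, A 0 1 * B 0 1;
      A 0 0 * B 1 0, A 0 0 * B 1 1, A 0 1 * B 1 0, A 0 1 * B 1 1;
      A 1 0 * B 0 0, A 1 0 * B 0 1, A 1 1 * B 0 0, A 1 1 * B 0 1;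
      A 1 0 * B 1 0, A 1 0 * B 1 1, A 1 1 * B 1 0, A 1 1 * B 1 1] := by
  ext i j
  fin_cases i <;> fin_cases j <;> rfl

set_option maxHeartbeats 1000000 in
theorem sig_commutator_table :
    ⁅sig 1 3, sig 1 0⁆ = 0 ∧ ⁅sig 1 3, sig 0 1⁆ = sig 1 2 ∧ ⁅sig 1 3, sig 1 1⁆ = sig 0 2 ∧
    ⁅sig 2 2, sig 1 0⁆ = -sig 3 2 ∧ ⁅sig 2 2, sig 0 1⁆ = -sig 2 3 ∧ ⁅sig 2 2, sig 1 1⁆ = 0 ∧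
    ⁅sig 3 1, sig 1 0⁆ = sig 2 1 ∧ ⁅sig 3 1, sig 0 1⁆ = 0 ∧ ⁅sig 3 1, sig 1 1⁆ = sig 2 0 := by
  refine ⟨?_, ?_, ?_, ?_, ?_, ?_, ?_, ?_, ?_⟩ <;>
  · ext i j
    fin_cases i <;> fin_cases j <;>
      simp [Ring.lie_def, sig, kron_fin_two, pauli, σ1, σ2, σ3, one_fin_two] <;>
      field_simp <;> ring_nf

lemma aSpan_eq : aSpan = span ℝ {sig 1 0, sig 0 1, sig 1 1} := rfl

lemma aPrimeSpan_eq : aPrimeSpan = span ℝ {sig 1 3, sig 2 2, sig 3 1} := rfl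

lemma kSpan_eq :
    kSpan = span ℝ {sig 2 0, sig 1 2, sig 3 2, sig 0 2, sig 2 1, sig 2 3} := rfl

/-- `[a', a] ⊆ k`. -/
theorem lie_aPrime_a_subset_k :
    ∀ X ∈ aPrimeSpan, ∀ Y ∈ aSpan, ⁅X, Y⁆ ∈ kSpan := by
  intro X hX Y hY
  rw [aPrimeSpan_eq] at hX
  rw [aSpan_eq] at hY
  rw [kSpan_eq]
  refine Ring.lie_mem_of_mem_span ?_ hX hY
  obtain ⟨h₁, h₂, h₃, h₄, h₅, h₆, h₇, h₈, h₉⟩ := sig_commutator_table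
  simp only [Set.mem_insert_iff, Set.mem_singleton_iff]
  rintro x (rfl | rfl | rfl) y (rfl | rfl | rfl) <;>
    simp only [h₁, h₂, h₃, h₄, h₅, h₆, h₇, h₈, h₉, neg_mem_iff, zero_mem] <;>
    exact subset_span (by simp)
end
end

section
/- For real α₁, α₂, α₃, the matrix exponential satisfies exp(α₁λ₁ + α₂λ₄ + α₃λ₇) = x₀' I₄ + x₁ λ₁ + x₂ λ₄ + x₃ λ₇, where x₀' = cos(α₁/2)cos(α₂/2)cos(α₃/2) + i sin(α₁/2)sin(α₂/2)sin(α₃/2), x₁ = 2(sin(α₁/2)cos(α₂/2)cos(α₃/2) − i cos(α₁/2)sin(α₂/2)sin(α₃/2)), x₂ = 2(cos(α₁/2)sin(α₂/2)cos(α₃/2) − i sin(α₁/2)cos(α₂/2)sin(α₃/2)), x₃ = 2(cos(α₁/2)cos(α₂/2)sin(α₃/2) − i sin(α₁/2)sin(α₂/2)cos(α₃/2)). -/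
open Matrix Complex

noncomputable section

set_option maxHeartbeats 2000000

lemma expaux1 (x y z : ℝ) :
    Complex.exp (((x:ℂ) + y + z) / (2 * I)) =
      (Complex.cos (x / 2) - Complex.sin (x / 2) * I) *
      ((Complex.cos (y / 2) - Complex.sin (y / 2) * I) *
       (Complex.cos (z / 2) - Complex.sin (z / 2) * I)) := by
  have h2I : (2 * I : ℂ) ≠ 0 := by simp [Complex.I_ne_zero]
  have h : ((x:ℂ) + y + z) / (2 * I) =
      (-((x:ℂ)/2)) * I + ((-((y:ℂ)/2)) * I + (-((z:ℂ)/2)) * I) := by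
    rw [div_eq_iff h2I]
    linear_combination ((x:ℂ) + y + z) * Complex.I_sq
  rw [h, Complex.exp_add, Complex.exp_add, Complex.exp_mul_I, Complex.exp_mul_I,
    Complex.exp_mul_I, Complex.cos_neg, Complex.sin_neg, Complex.cos_neg, Complex.sin_neg,
    Complex.cos_neg, Complex.sin_neg]
  ring

lemma expaux2 (x y z : ℝ) :
    Complex.exp (((x:ℂ) - y - z) / (2 * I)) =
      (Complex.cos (x / 2) - Complex.sin (x / 2) * I) *
      ((Complex.cos (y / 2) + Complex.sin (y / 2) * I) *
       (Complex.cos (z / 2) + Complex.sin (z / 2) * I)) := by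
  have h2I : (2 * I : ℂ) ≠ 0 := by simp [Complex.I_ne_zero]
  have h : ((x:ℂ) - y - z) / (2 * I) =
      (-((x:ℂ)/2)) * I + (((y:ℂ)/2) * I + ((z:ℂ)/2) * I) := by
    rw [div_eq_iff h2I]
    linear_combination ((x:ℂ) - y - z) * Complex.I_sq
  rw [h, Complex.exp_add, Complex.exp_add, Complex.exp_mul_I, Complex.exp_mul_I,
    Complex.exp_mul_I, Complex.cos_neg, Complex.sin_neg]
  ring

lemma expaux3 (x y z : ℝ) :
    Complex.exp ((-(x:ℂ) + y - z) / (2 * I)) =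
      (Complex.cos (x / 2) + Complex.sin (x / 2) * I) *
      ((Complex.cos (y / 2) - Complex.sin (y / 2) * I) *
       (Complex.cos (z / 2) + Complex.sin (z / 2) * I)) := by
  have h2I : (2 * I : ℂ) ≠ 0 := by simp [Complex.I_ne_zero]
  have h : (-(x:ℂ) + y - z) / (2 * I) =
      (((x:ℂ)/2)) * I + ((-((y:ℂ)/2)) * I + ((z:ℂ)/2) * I) := by
    rw [div_eq_iff h2I]
    linear_combination (-(x:ℂ) + y - z) * Complex.I_sq
  rw [h, Complex.exp_add, Complex.exp_add, Complex.exp_mul_I, Complex.exp_mul_I,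
    Complex.exp_mul_I, Complex.cos_neg, Complex.sin_neg]
  ring

lemma expaux4 (x y z : ℝ) :
    Complex.exp ((-(x:ℂ) - y + z) / (2 * I)) =
      (Complex.cos (x / 2) + Complex.sin (x / 2) * I) *
      ((Complex.cos (y / 2) + Complex.sin (y / 2) * I) *
       (Complex.cos (z / 2) - Complex.sin (z / 2) * I)) := by
  have h2I : (2 * I : ℂ) ≠ 0 := by simp [Complex.I_ne_zero]
  have h : (-(x:ℂ) - y + z) / (2 * I) =
      (((x:ℂ)/2)) * I + ((((y:ℂ)/2)) * I + (-((z:ℂ)/2)) * I) := by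
    rw [div_eq_iff h2I]
    linear_combination (-(x:ℂ) - y + z) * Complex.I_sq
  rw [h, Complex.exp_add, Complex.exp_add, Complex.exp_mul_I, Complex.exp_mul_I,
    Complex.exp_mul_I, Complex.cos_neg, Complex.sin_neg]
  ring

/-- explicit form of `exp(α₁λ₁ + α₂λ₄ + α₃λ₇)` as a combination of
`I₄, λ₁, λ₄, λ₇`. -/
theorem exp_a_factor_explicit (α₁ α₂ α₃ : ℝ) :
    NormedSpace.exp ((α₁ : ℂ) • fano 0 + (α₂ : ℂ) • fano 3 + (α₃ : ℂ) • fano 6) =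
      (Complex.cos (α₁ / 2) * Complex.cos (α₂ / 2) * Complex.cos (α₃ / 2) +
        I * (Complex.sin (α₁ / 2) * Complex.sin (α₂ / 2) * Complex.sin (α₃ / 2))) •
        (1 : Matrix (Fin 4) (Fin 4) ℂ) +
      (2 * (Complex.sin (α₁ / 2) * Complex.cos (α₂ / 2) * Complex.cos (α₃ / 2) -
        I * (Complex.cos (α₁ / 2) * Complex.sin (α₂ / 2) * Complex.sin (α₃ / 2)))) • fano 0 +
      (2 * (Complex.cos (α₁ / 2) * Complex.sin (α₂ / 2) * Complex.cos (α₃ / 2) -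
        I * (Complex.sin (α₁ / 2) * Complex.cos (α₂ / 2) * Complex.sin (α₃ / 2)))) • fano 3 +
      (2 * (Complex.cos (α₁ / 2) * Complex.cos (α₂ / 2) * Complex.sin (α₃ / 2) -
        I * (Complex.sin (α₁ / 2) * Complex.sin (α₂ / 2) * Complex.cos (α₃ / 2)))) • fano 6 := by
  have hf0 : fano 0 = (1/(2*I)) • !![0,0,1,0; 0,0,0,1; 1,0,0,0; 0,1,0,0] := by
    have h : fano 0 = sig 1 0 := rfl
    rw [h]; ext i j
    fin_cases i <;> fin_cases j <;>
      norm_num [sig, kron, pauli, σ1, Matrix.one_apply, Fin.ext_iff]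
  have hf3 : fano 3 = (1/(2*I)) • !![0,1,0,0; 1,0,0,0; 0,0,0,1; 0,0,1,0] := by
    have h : fano 3 = sig 0 1 := rfl
    rw [h]; ext i j
    fin_cases i <;> fin_cases j <;>
      norm_num [sig, kron, pauli, σ1, Matrix.one_apply, Fin.ext_iff]
  have hf6 : fano 6 = (1/(2*I)) • !![0,0,0,1; 0,0,1,0; 0,1,0,0; 1,0,0,0] := by
    have h : fano 6 = sig 1 1 := rfl
    rw [h]; ext i j
    fin_cases i <;> fin_cases j <;>
      norm_num [sig, kron, pauli, σ1, Matrix.one_apply, Fin.ext_iff]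
  rw [hf0, hf3, hf6]
  set U : Matrix (Fin 4) (Fin 4) ℂ :=
    !![1,1,1,1; 1,-1,1,-1; 1,1,-1,-1; 1,-1,-1,1] with hUdef
  set v : Fin 4 → ℂ := ![((α₁:ℂ) + α₂ + α₃)/(2*I), ((α₁:ℂ) - α₂ - α₃)/(2*I),
      (-(α₁:ℂ) + α₂ - α₃)/(2*I), (-(α₁:ℂ) - α₂ + α₃)/(2*I)] with hvdef
  have hI3 : (I:ℂ)^3 = -I := by rw [pow_succ, Complex.I_sq]; ring
  have hI4 : (I:ℂ)^4 = 1 := by rw [pow_succ, hI3]; simp [Complex.I_mul_I]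
  have hUmul : U * ((4:ℂ)⁻¹ • U) = 1 := by
    ext i j
    fin_cases i <;> fin_cases j <;>
      simp only [hUdef, Matrix.smul_apply, Matrix.mul_apply, Fin.sum_univ_four,
        Matrix.of_apply, Matrix.cons_val', Matrix.cons_val_zero, Matrix.cons_val_one,
        Matrix.head_cons, Matrix.head_fin_const, Matrix.cons_val_fin_one, Matrix.empty_val',
        Matrix.one_apply, smul_eq_mul, Fin.isValue, Matrix.cons_val_two, Matrix.cons_val_three,
        Matrix.tail_cons, Matrix.one_apply_eq, Fin.reduceEq, reduceIte, ite_true, ite_false] <;>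
      norm_num [Fin.ext_iff]
  have hUinv : U⁻¹ = (4:ℂ)⁻¹ • U := Matrix.inv_eq_right_inv hUmul
  have hUnit : IsUnit U :=
    ⟨⟨U, (4:ℂ)⁻¹ • U, hUmul, mul_eq_one_comm.mp hUmul⟩, rfl⟩
  have hA : (α₁ : ℂ) • ((1/(2*I)) • !![0,0,1,0; 0,0,0,1; 1,0,0,0; 0,1,0,0]) +
      (α₂ : ℂ) • ((1/(2*I)) • !![0,1,0,0; 1,0,0,0; 0,0,0,1; 0,0,1,0]) +
      (α₃ : ℂ) • ((1/(2*I)) • !![0,0,0,1; 0,0,1,0; 0,1,0,0; 1,0,0,0]) =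
      U * Matrix.diagonal v * U⁻¹ := by
    have hdiv : ∀ x : ℂ, x / (2*I) = -x*I/2 := by
      intro x
      rw [div_eq_iff (by simp [Complex.I_ne_zero] : (2*I:ℂ) ≠ 0)]
      linear_combination x * Complex.I_sq
    rw [hUinv]
    ext i j
    fin_cases i <;> fin_cases j <;>
      simp only [hUdef, hvdef, Matrix.add_apply, Matrix.smul_apply,
        Matrix.mul_apply, Matrix.mul_diagonal, Fin.sum_univ_four, Matrix.of_apply,
        Matrix.cons_val', Matrix.cons_val_zero, Matrix.cons_val_one, Matrix.head_cons,
        Matrix.head_fin_const, Matrix.cons_val_fin_one, Matrix.empty_val', Matrix.one_apply,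
        smul_eq_mul, Fin.isValue, Matrix.diagonal_apply, Matrix.cons_val_two,
        Matrix.cons_val_three, Matrix.tail_cons, Matrix.one_apply_eq, Fin.reduceEq, reduceIte,
        ite_true, ite_false, Complex.inv_I, hdiv] <;>
      norm_num [Fin.ext_iff]
    all_goals try ring
  rw [hA, Matrix.exp_conj U (Matrix.diagonal v) hUnit, Matrix.exp_diagonal]
  have hw : NormedSpace.exp v =
      ![(Complex.cos (α₁/2) - Complex.sin (α₁/2)*I) *
          ((Complex.cos (α₂/2) - Complex.sin (α₂/2)*I) *
           (Complex.cos (α₃/2) - Complex.sin (α₃/2)*I)),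
        (Complex.cos (α₁/2) - Complex.sin (α₁/2)*I) *
          ((Complex.cos (α₂/2) + Complex.sin (α₂/2)*I) *
           (Complex.cos (α₃/2) + Complex.sin (α₃/2)*I)),
        (Complex.cos (α₁/2) + Complex.sin (α₁/2)*I) *
          ((Complex.cos (α₂/2) - Complex.sin (α₂/2)*I) *
           (Complex.cos (α₃/2) + Complex.sin (α₃/2)*I)),
        (Complex.cos (α₁/2) + Complex.sin (α₁/2)*I) *
          ((Complex.cos (α₂/2) + Complex.sin (α₂/2)*I) *
           (Complex.cos (α₃/2) - Complex.sin (α₃/2)*I))] := by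
    rw [Pi.exp_def, ← Complex.exp_eq_exp_ℂ]
    funext j
    fin_cases j
    · simpa [hvdef] using expaux1 α₁ α₂ α₃
    · simpa [hvdef] using expaux2 α₁ α₂ α₃
    · simpa [hvdef] using expaux3 α₁ α₂ α₃
    · simpa [hvdef] using expaux4 α₁ α₂ α₃
  rw [hw, hUinv]
  ext i j
  fin_cases i <;> fin_cases j <;>
    simp only [hUdef, Matrix.add_apply, Matrix.smul_apply,
      Matrix.mul_apply, Matrix.mul_diagonal, Fin.sum_univ_four, Matrix.of_apply,
      Matrix.cons_val', Matrix.cons_val_zero, Matrix.cons_val_one, Matrix.head_cons,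
      Matrix.head_fin_const, Matrix.cons_val_fin_one, Matrix.empty_val', Matrix.one_apply,
      smul_eq_mul, Fin.isValue, Matrix.diagonal_apply, Matrix.cons_val_two,
      Matrix.cons_val_three, Matrix.tail_cons, Matrix.one_apply_eq, Fin.reduceEq, reduceIte,
      ite_true, ite_false, Complex.inv_I]
  all_goals norm_num [Fin.ext_iff]
  all_goals try ring_nf
  all_goals simp only [Complex.I_sq, hI3, hI4]
  all_goals try ring_nf
end
end

section
/- For real β₁, β₂, β₃, exp(β₁λ₉ + β₂λ₁₁ + β₃λ₁₃) = H₂ D(β) H₂ᵀ, where H₂ = (1/2)[[-1,1,-1,1],[-1,1,1,-1],[-1,-1,1,1],[1,1,1,1]] and D(β) = diag(e^{-i(β₁+β₂+β₃)/2}, e^{i(β₁+β₂-β₃)/2}, e^{i(β₁-β₂+β₃)/2}, e^{i(-β₁+β₂+β₃)/2}). -/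
open Matrix Complex

noncomputable section

/-- The diagonal matrix `D(x)` of equation (eq:diag). -/
def Dmat (x₁ x₂ x₃ : ℝ) : Matrix (Fin 4) (Fin 4) ℂ :=
  Matrix.diagonal
    ![Complex.exp (-(I / 2) * (x₁ + x₂ + x₃)),
      Complex.exp ((I / 2) * (x₁ + x₂ - x₃)),
      Complex.exp ((I / 2) * (x₁ - x₂ + x₃)),
      Complex.exp ((I / 2) * (-x₁ + x₂ + x₃))]

/-- The Hadamard-type matrix `H₂`. -/
def H₂ : Matrix (Fin 4) (Fin 4) ℂ :=
  (1 / 2 : ℂ) • !![-1, 1, -1, 1; -1, 1, 1, -1; -1, -1, 1, 1; 1, 1, 1, 1]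


lemma kron13 : kron σ1 σ3 = !![0,0,1,0; 0,0,0,-1; 1,0,0,0; 0,-1,0,0] := by
  ext i j; fin_cases i <;> fin_cases j <;> norm_num [kron, σ1, σ3]

/-! `λ₉`, `λ₁₁`, `λ₁₃` are simultaneously diagonalised by the orthogonal matrix `H₂`; since
`H₂ᵀ = H₂⁻¹`, the exponential of their combination is `H₂` times the entrywise exponential of
the diagonal times `H₂ᵀ`. -/

theorem Matrix.exp_conj_of_mul_eq_one {m 𝕂 : Type*} [Fintype m] [DecidableEq m] [RCLike 𝕂]
    {U V : Matrix m m 𝕂} (h : U * V = 1) (A : Matrix m m 𝕂) :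
    NormedSpace.exp (U * A * V) = U * NormedSpace.exp A * V := by
  rw [← Matrix.inv_eq_right_inv h]
  exact Matrix.exp_conj U A
    ((Matrix.isUnit_iff_isUnit_det U).mpr (Matrix.isUnit_det_of_right_inverse h))

theorem H₂_mul_transpose : H₂ * H₂ᵀ = 1 := by
  ext i j
  fin_cases i <;> fin_cases j <;>
    simp [H₂, Matrix.mul_apply, Fin.sum_univ_four] <;> norm_num

theorem one_div_two_mul_I : (1 : ℂ) / (2 * I) = -(I / 2) := by
  field_simp
  simp [I_sq]

theorem fano_eight :
    fano 8 = -(I / 2) • !![0, 0, 1, 0; 0, 0, 0, -1; 1, 0, 0, 0; 0, -1, 0, 0] := by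
  rw [show fano 8 = (1 / (2 * I)) • kron σ1 σ3 from rfl, one_div_two_mul_I]
  congr 1
  ext i j; fin_cases i <;> fin_cases j <;> norm_num [kron, σ1, σ3]

theorem fano_ten :
    fano 10 = -(I / 2) • !![0, 0, 0, -1; 0, 0, 1, 0; 0, 1, 0, 0; -1, 0, 0, 0] := by
  rw [show fano 10 = (1 / (2 * I)) • kron σ2 σ2 from rfl, one_div_two_mul_I]
  congr 1
  ext i j; fin_cases i <;> fin_cases j <;> norm_num [kron, σ2]

theorem fano_twelve :
    fano 12 = -(I / 2) • !![0, 1, 0, 0; 1, 0, 0, 0; 0, 0, 0, -1; 0, 0, -1, 0] := by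
  rw [show fano 12 = (1 / (2 * I)) • kron σ3 σ1 from rfl, one_div_two_mul_I]
  congr 1
  ext i j; fin_cases i <;> fin_cases j <;> norm_num [kron, σ1, σ3]

def DmatLog (x₁ x₂ x₃ : ℝ) : Fin 4 → ℂ :=
  ![-(I / 2) * (x₁ + x₂ + x₃), (I / 2) * (x₁ + x₂ - x₃), (I / 2) * (x₁ - x₂ + x₃),
    (I / 2) * (-x₁ + x₂ + x₃)]

theorem Dmat_eq_exp_diagonal (x₁ x₂ x₃ : ℝ) :
    Dmat x₁ x₂ x₃ = NormedSpace.exp (diagonal (DmatLog x₁ x₂ x₃)) := by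
  rw [Matrix.exp_diagonal, Dmat, Pi.exp_def]
  congr 1
  funext k
  fin_cases k <;> simp [DmatLog, ← Complex.exp_eq_exp_ℂ]

theorem fano_combination_eq_H₂_conj (β₁ β₂ β₃ : ℝ) :
    (β₁ : ℂ) • fano 8 + (β₂ : ℂ) • fano 10 + (β₃ : ℂ) • fano 12 =
      H₂ * diagonal (DmatLog β₁ β₂ β₃) * H₂ᵀ := by
  rw [fano_eight, fano_ten, fano_twelve]
  ext i j
  simp only [Matrix.mul_apply, Matrix.transpose_apply, Fin.sum_univ_four]
  fin_cases i <;> fin_cases j <;>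
    · simp [H₂, DmatLog]
      ring

/-- `exp(β₁λ₉ + β₂λ₁₁ + β₃λ₁₃) = H₂ D(β) H₂ᵀ`. -/
theorem exp_aPrime_factor_eq_H2_D_H2T (β₁ β₂ β₃ : ℝ) :
    NormedSpace.exp ((β₁ : ℂ) • fano 8 + (β₂ : ℂ) • fano 10 + (β₃ : ℂ) • fano 12) =
      H₂ * Dmat β₁ β₂ β₃ * H₂ᵀ := by
  rw [fano_combination_eq_H₂_conj, Matrix.exp_conj_of_mul_eq_one H₂_mul_transpose,
    Dmat_eq_exp_diagonal]
end
end
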